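/- arXiv:0809.4067 — 4 statements merged into one kernel-verified Lean document; each statement's English description precedes it below -/
import Mathlib

section
/- Let A and B be square matrices with non-negative integer entries (of possibly different sizes). If A and B are strong shift equivalent, then A and B are shift equivalent over ℤ⁺. -/
/-- A square integer matrix of some size. -/
structure SqMat where
  n : ℕ
  M : Matrix (Fin n) (Fin n) ℤ

/-- Elementary strong shift equivalence (through non-negative integer matrices):
`A = RS` and `B = SR` for non-negative integer matrices `R`, `S`. -/
def ElemSSE (A B : SqMat) : Prop :=
  ∃ (R : Matrix (Fin A.n) (Fin B.n) ℤ) (S : Matrix (Fin B.n) (Fin A.n) ℤ),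
    (∀ i j, 0 ≤ R i j) ∧ (∀ i j, 0 ≤ S i j) ∧ A.M = R * S ∧ B.M = S * R

/-- Strong shift equivalence: the transitive closure of elementary strong
shift equivalence. -/
def StrongShiftEquiv : SqMat → SqMat → Prop :=
  Relation.TransGen ElemSSE

/-- Shift equivalence over `ℤ⁺` with some lag `k ≥ 1`. -/
def ShiftEquivZPlus {n m : ℕ} (A : Matrix (Fin n) (Fin n) ℤ)
    (B : Matrix (Fin m) (Fin m) ℤ) : Prop :=
  ∃ (R : Matrix (Fin n) (Fin m) ℤ) (S : Matrix (Fin m) (Fin n) ℤ) (k : ℕ),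
    0 < k ∧ (∀ i j, 0 ≤ R i j) ∧ (∀ i j, 0 ≤ S i j) ∧
    A * R = R * B ∧ B * S = S * A ∧ A ^ k = R * S ∧ S * R = B ^ k


/-! An elementary strong shift equivalence `A = RS`, `B = SR` is a shift equivalence of lag `1`
with the same `R` and `S`, and shift equivalences compose: the connecting matrices multiply
and the lags add. -/

namespace Matrix

variable {α : Type*} {l m n : Type*}

theorem mul_apply_nonneg [Semiring α] [PartialOrder α] [IsOrderedRing α] [Fintype m]
    {M : Matrix l m α} {N : Matrix m n α} (hM : ∀ i j, 0 ≤ M i j) (hN : ∀ i j, 0 ≤ N i j) :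
    ∀ i j, 0 ≤ (M * N) i j :=
  fun i j => Finset.sum_nonneg fun k _ => mul_nonneg (hM i k) (hN k j)

theorem pow_mul_eq_mul_pow_of_mul_eq_mul [Semiring α] [Fintype m] [DecidableEq m] [Fintype n]
    [DecidableEq n] {A : Matrix m m α} {B : Matrix n n α} {R : Matrix m n α}
    (h : A * R = R * B) (k : ℕ) : A ^ k * R = R * B ^ k := by
  induction k with
  | zero => simp
  | succ k ih => rw [pow_succ, pow_succ, Matrix.mul_assoc, h, ← Matrix.mul_assoc, ih,
      Matrix.mul_assoc]

end Matrix

theorem ShiftEquivZPlus.trans {a b c : ℕ} {A : Matrix (Fin a) (Fin a) ℤ}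
    {B : Matrix (Fin b) (Fin b) ℤ} {C : Matrix (Fin c) (Fin c) ℤ}
    (hAB : ShiftEquivZPlus A B) (hBC : ShiftEquivZPlus B C) : ShiftEquivZPlus A C := by
  obtain ⟨R₁, S₁, k₁, hk₁, hR₁, hS₁, hAR₁, hBS₁, hRS₁, hSR₁⟩ := hAB
  obtain ⟨R₂, S₂, k₂, hk₂, hR₂, hS₂, hBR₂, hCS₂, hRS₂, hSR₂⟩ := hBC
  refine ⟨R₁ * R₂, S₂ * S₁, k₁ + k₂, by omega, Matrix.mul_apply_nonneg hR₁ hR₂,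
    Matrix.mul_apply_nonneg hS₂ hS₁, ?_, ?_, ?_, ?_⟩
  · rw [← Matrix.mul_assoc, hAR₁, Matrix.mul_assoc, hBR₂, Matrix.mul_assoc]
  · rw [← Matrix.mul_assoc, hCS₂, Matrix.mul_assoc, hBS₁, Matrix.mul_assoc]
  · calc A ^ (k₁ + k₂) = R₁ * (S₁ * A ^ k₂) := by rw [pow_add, hRS₁, Matrix.mul_assoc]
      _ = R₁ * (B ^ k₂ * S₁) := by rw [Matrix.pow_mul_eq_mul_pow_of_mul_eq_mul hBS₁]
      _ = R₁ * R₂ * (S₂ * S₁) := by simp only [hRS₂, Matrix.mul_assoc]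
  · calc S₂ * S₁ * (R₁ * R₂) = S₂ * (B ^ k₁ * R₂) := by simp only [← hSR₁, Matrix.mul_assoc]
      _ = S₂ * R₂ * C ^ k₁ := by
        rw [Matrix.pow_mul_eq_mul_pow_of_mul_eq_mul hBR₂, Matrix.mul_assoc]
      _ = C ^ (k₁ + k₂) := by rw [hSR₂, ← pow_add, Nat.add_comm]

theorem ElemSSE.shiftEquivZPlus {X Y : SqMat} (h : ElemSSE X Y) : ShiftEquivZPlus X.M Y.M := by
  obtain ⟨R, S, hR, hS, hRS, hSR⟩ := h
  refine ⟨R, S, 1, one_pos, hR, hS, ?_, ?_, by rw [pow_one, hRS], by rw [pow_one, hSR]⟩ <;>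
    rw [hRS, hSR, Matrix.mul_assoc]

theorem StrongShiftEquiv.shiftEquivZPlus {X Y : SqMat} (h : StrongShiftEquiv X Y) :
    ShiftEquivZPlus X.M Y.M :=
  h.trans_induction_on ElemSSE.shiftEquivZPlus fun _ _ => ShiftEquivZPlus.trans

theorem shiftEquiv_of_strongShiftEquiv_general (n m : ℕ)
    (A : Matrix (Fin n) (Fin n) ℤ) (B : Matrix (Fin m) (Fin m) ℤ)
    (h : StrongShiftEquiv ⟨n, A⟩ ⟨m, B⟩) :
    ShiftEquivZPlus A B :=
  h.shiftEquivZPlus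

theorem shiftEquiv_of_strongShiftEquiv (n m : ℕ)
    (A : Matrix (Fin n) (Fin n) ℤ) (B : Matrix (Fin m) (Fin m) ℤ)
    (hA : ∀ i j, 0 ≤ A i j) (hB : ∀ i j, 0 ≤ B i j)
    (h : StrongShiftEquiv ⟨n, A⟩ ⟨m, B⟩) :
    ShiftEquivZPlus A B :=
  shiftEquiv_of_strongShiftEquiv_general n m A B h
end

section
/- Let A be an n×n and B an m×m matrix with non-negative integer entries. If A and B are shift equivalent over ℤ⁺, then the Bowen–Franks groups ℤⁿ/(I − A)ℤⁿ and ℤᵐ/(I − B)ℤᵐ are isomorphic abelian groups. -/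
/-- The cokernel `ℤⁿ/Mℤⁿ` of the ℤ-linear map `ℤⁿ → ℤⁿ` given by an
integer matrix `M`. -/
abbrev cokernel {n : ℕ} (M : Matrix (Fin n) (Fin n) ℤ) : Type :=
  (Fin n → ℤ) ⧸ LinearMap.range M.mulVecLin

/-!
Since `M ^ k - 1 = -(1 - M) (1 + M + ⋯ + M ^ (k - 1))`, every power of `M` acts as the identity
on the cokernel of `1 - M`. A matrix `S` with `B S = S A` induces a map from the cokernel of
`1 - A` to that of `1 - B`; for a shift equivalence `(R, S)` of lag `k` the two induced maps
compose to the maps induced by `A ^ k` and `B ^ k`, hence are mutually inverse.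
-/

open LinearMap

namespace Matrix

variable {R : Type*} [CommRing R] {ι κ : Type*} [Fintype ι] [Fintype κ]

lemma range_mulVecLin_le_comap_of_mul_eq {M : Matrix ι ι R} {N : Matrix κ κ R}
    {S : Matrix κ ι R} (h : S * M = N * S) :
    range M.mulVecLin ≤ (range N.mulVecLin).comap S.mulVecLin := by
  rw [← Submodule.map_le_iff_le_comap, ← range_comp, ← mulVecLin_mul, h, mulVecLin_mul]
  exact range_comp_le_range _ _

variable [DecidableEq ι] [DecidableEq κ]

abbrev bowenFranksGroup (A : Matrix ι ι R) : Type _ :=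
  (ι → R) ⧸ range (1 - A).mulVecLin

lemma pow_mulVec_sub_mem_range_one_sub (M : Matrix ι ι R) (k : ℕ) (x : ι → R) :
    M ^ k *ᵥ x - x ∈ range (1 - M).mulVecLin := by
  refine ⟨-(∑ i ∈ Finset.range k, M ^ i) *ᵥ x, ?_⟩
  have hgeom : (1 - M) * -(∑ i ∈ Finset.range k, M ^ i) = M ^ k - 1 := by
    rw [mul_neg, ← neg_mul, neg_sub, mul_geom_sum]
  rw [mulVecLin_apply, mulVec_mulVec, hgeom, sub_mulVec, one_mulVec]

noncomputable def bowenFranksMap {A : Matrix ι ι R} {B : Matrix κ κ R} {S : Matrix κ ι R}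
    (h : B * S = S * A) : bowenFranksGroup A →ₗ[R] bowenFranksGroup B :=
  Submodule.mapQ _ _ S.mulVecLin <| range_mulVecLin_le_comap_of_mul_eq <| by
    rw [Matrix.mul_sub, Matrix.sub_mul, Matrix.mul_one, Matrix.one_mul, h]

lemma bowenFranksMap_comp_eq_id {A : Matrix ι ι R} {B : Matrix κ κ R} {S : Matrix κ ι R}
    {T : Matrix ι κ R} {k : ℕ} (hT : A * T = T * B) (hS : B * S = S * A)
    (hTS : T * S = A ^ k) : (bowenFranksMap hT).comp (bowenFranksMap hS) = LinearMap.id := by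
  refine Submodule.linearMap_qext _ (LinearMap.ext fun x => ?_)
  simpa [bowenFranksMap, Submodule.Quotient.eq, mulVec_mulVec, hTS] using
    pow_mulVec_sub_mem_range_one_sub A k x

noncomputable def bowenFranksEquivOfShiftEquiv {A : Matrix ι ι R} {B : Matrix κ κ R}
    {S : Matrix κ ι R} {T : Matrix ι κ R} {k : ℕ} (hT : A * T = T * B) (hS : B * S = S * A)
    (hTS : T * S = A ^ k) (hST : S * T = B ^ k) : bowenFranksGroup A ≃ₗ[R] bowenFranksGroup B :=
  .ofLinearMap (bowenFranksMap hS) (bowenFranksMap hT) (bowenFranksMap_comp_eq_id hS hT hST)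
    (bowenFranksMap_comp_eq_id hT hS hTS)

end Matrix

theorem bowenFranks_invariant_of_shiftEquiv_general (n m : ℕ)
    (A : Matrix (Fin n) (Fin n) ℤ) (B : Matrix (Fin m) (Fin m) ℤ)
    (h : ShiftEquivZPlus A B) :
    Nonempty (cokernel (1 - A) ≃+ cokernel (1 - B)) := by
  obtain ⟨R, S, k, -, -, -, hAR, hBS, hRS, hSR⟩ := h
  exact ⟨(Matrix.bowenFranksEquivOfShiftEquiv hAR hBS hRS.symm hSR).toAddEquiv⟩

theorem bowenFranks_invariant_of_shiftEquiv (n m : ℕ)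
    (A : Matrix (Fin n) (Fin n) ℤ) (B : Matrix (Fin m) (Fin m) ℤ)
    (hA : ∀ i j, 0 ≤ A i j) (hB : ∀ i j, 0 ≤ B i j)
    (h : ShiftEquivZPlus A B) :
    Nonempty (cokernel (1 - A) ≃+ cokernel (1 - B)) :=
  bowenFranks_invariant_of_shiftEquiv_general n m A B h
end

section
/- Let A be an n×n and B an m×m matrix of 0's and 1's, and suppose A and B are strong shift equivalent (through 0-1 matrices). Then the subshifts of finite type (X_A, σ_A) and (X_B, σ_B) are topologically conjugate: there is a homeomorphism h : X_A → X_B with h ∘ σ_A = σ_B ∘ h. -/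
/-- The subshift of finite type `X_A ⊆ (Fin n)^ℤ` determined by a 0-1 matrix `A`:
bi-infinite sequences `x` with `A (x k) (x (k+1)) = 1` for all `k ∈ ℤ`. -/
def SubshiftSpace {n : ℕ} (A : Matrix (Fin n) (Fin n) ℤ) : Set (ℤ → Fin n) :=
  {x | ∀ k : ℤ, A (x k) (x (k + 1)) = 1}

/-- The shift map `σ_A : X_A → X_A`, the restriction of the full shift
`(σ x)_k = x_{k+1}`. -/
def shiftMap {n : ℕ} (A : Matrix (Fin n) (Fin n) ℤ) (x : SubshiftSpace A) :
    SubshiftSpace A :=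
  ⟨fun k => (x : ℤ → Fin n) (k + 1), fun k => x.2 (k + 1)⟩

/-- A 0-1 matrix. -/
def SqMat.ZeroOne (A : SqMat) : Prop :=
  ∀ i j, A.M i j = 0 ∨ A.M i j = 1

/-- Elementary strong shift equivalence through 0-1 matrices: `A`, `B` are
0-1 matrices and `A = RS`, `B = SR` for non-negative integer matrices `R`, `S`. -/
def ElemSSE01 (A B : SqMat) : Prop :=
  A.ZeroOne ∧ B.ZeroOne ∧
  ∃ (R : Matrix (Fin A.n) (Fin B.n) ℤ) (S : Matrix (Fin B.n) (Fin A.n) ℤ),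
    (∀ i j, 0 ≤ R i j) ∧ (∀ i j, 0 ≤ S i j) ∧ A.M = R * S ∧ B.M = S * R

/-- Strong shift equivalence through 0-1 matrices: the transitive closure of
elementary strong shift equivalence. -/
def StrongShiftEquiv01 : SqMat → SqMat → Prop :=
  Relation.TransGen ElemSSE01

/-! When `A = RS` and `B = SR` are 0-1 matrices with `R, S ≥ 0`, every edge `i → j` of `A`
factors as `R i k = 1`, `S k j = 1` through a unique middle symbol `k`. Replacing each edge
`(x k, x (k + 1))` of a point of `X_A` by its middle symbol gives a continuous map
`X_A → X_B` commuting with the shifts; the same construction for `(S, R)` composed with it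
yields the shift in either order, so it is bijective, and a continuous bijection from the
compact space `X_A` onto the Hausdorff space `X_B` is a homeomorphism. -/

open Finset

section Factorization

variable {ι κ ι' : Type*} [Fintype κ] {R : Matrix ι κ ℤ} {S : Matrix κ ι' ℤ}

theorem existsUnique_of_mul_apply_eq_one (hR : ∀ i k, 0 ≤ R i k) (hS : ∀ k j, 0 ≤ S k j)
    {i : ι} {j : ι'} (h : (R * S) i j = 1) : ∃! k, R i k = 1 ∧ S k j = 1 := by
  classical
  have hsum : ∑ k, R i k * S k j = 1 := h
  have hnonneg : ∀ k, 0 ≤ R i k * S k j := fun k => mul_nonneg (hR i k) (hS k j)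
  have hone : ∀ k, R i k * S k j = 1 → R i k = 1 ∧ S k j = 1 := fun k hk =>
    ⟨Int.eq_one_of_mul_eq_one_right (hR i k) hk, Int.eq_one_of_mul_eq_one_left (hS k j) hk⟩
  obtain ⟨k, -, hk⟩ := exists_ne_zero_of_sum_ne_zero (hsum ▸ one_ne_zero : ∑ k, R i k * S k j ≠ 0)
  have hk_le : R i k * S k j ≤ 1 := hsum ▸ single_le_sum (fun k _ => hnonneg k) (mem_univ k)
  refine ⟨k, hone k (by have := hnonneg k; omega), fun k' ⟨hRk', hSk'⟩ => by_contra fun hne => ?_⟩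
  have hpair : R i k' * S k' j + R i k * S k j ≤ 1 := by
    rw [← hsum, ← sum_pair (f := fun l => R i l * S l j) hne]
    exact sum_le_sum_of_subset_of_nonneg (subset_univ _) fun l _ _ => hnonneg l
  rw [hRk', hSk'] at hpair
  have := hnonneg k
  omega

theorem mul_apply_eq_one_of_eq_one (hR : ∀ i k, 0 ≤ R i k) (hS : ∀ k j, 0 ≤ S k j)
    {i : ι} {k : κ} {j : ι'} (h01 : (R * S) i j = 0 ∨ (R * S) i j = 1)
    (hik : R i k = 1) (hkj : S k j = 1) : (R * S) i j = 1 := by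
  have : R i k * S k j ≤ (R * S) i j :=
    single_le_sum (fun l _ => mul_nonneg (hR i l) (hS l j)) (mem_univ k)
  rw [hik, hkj] at this
  omega

noncomputable def edgeMid (hR : ∀ i k, 0 ≤ R i k) (hS : ∀ k j, 0 ≤ S k j)
    (e : {e : ι × ι' // (R * S) e.1 e.2 = 1}) : κ :=
  (existsUnique_of_mul_apply_eq_one hR hS e.2).exists.choose

theorem edgeMid_spec (hR : ∀ i k, 0 ≤ R i k) (hS : ∀ k j, 0 ≤ S k j)
    (e : {e : ι × ι' // (R * S) e.1 e.2 = 1}) :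
    R e.1.1 (edgeMid hR hS e) = 1 ∧ S (edgeMid hR hS e) e.1.2 = 1 :=
  (existsUnique_of_mul_apply_eq_one hR hS e.2).exists.choose_spec

end Factorization

theorem isClosed_subshiftSpace {n : ℕ} (A : Matrix (Fin n) (Fin n) ℤ) :
    IsClosed (SubshiftSpace A) := by
  simp only [SubshiftSpace, Set.ofPred_forall]
  exact isClosed_iInter fun k => isClosed_eq (by fun_prop) continuous_const

instance {n : ℕ} (A : Matrix (Fin n) (Fin n) ℤ) : CompactSpace (SubshiftSpace A) :=
  isCompact_iff_compactSpace.mp (isClosed_subshiftSpace A).isCompact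

theorem shiftMap_bijective {n : ℕ} (A : Matrix (Fin n) (Fin n) ℤ) :
    Function.Bijective (shiftMap A) := by
  refine ⟨fun x x' h => Subtype.ext <| funext fun k => ?_, fun x => ?_⟩
  · simpa [shiftMap] using congrFun (congrArg Subtype.val h) (k - 1)
  · refine ⟨⟨fun k => x.1 (k - 1), fun k => ?_⟩, Subtype.ext <| funext fun k => ?_⟩
    · simpa using x.2 (k - 1)
    · simp [shiftMap]

section HalfShift

variable {p q : ℕ} {R : Matrix (Fin p) (Fin q) ℤ} {S : Matrix (Fin q) (Fin p) ℤ}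
  (hR : ∀ i k, 0 ≤ R i k) (hS : ∀ k j, 0 ≤ S k j)
  (hSR : ∀ k l, (S * R) k l = 0 ∨ (S * R) k l = 1)

noncomputable def halfShift (x : SubshiftSpace (R * S)) : SubshiftSpace (S * R) :=
  ⟨fun k => edgeMid hR hS ⟨(x.1 k, x.1 (k + 1)), x.2 k⟩, fun k =>
    mul_apply_eq_one_of_eq_one hS hR (hSR _ _) (edgeMid_spec hR hS _).2
      (edgeMid_spec hR hS ⟨(x.1 (k + 1), x.1 (k + 1 + 1)), x.2 (k + 1)⟩).1⟩

theorem halfShift_spec (x : SubshiftSpace (R * S)) (k : ℤ) :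
    R (x.1 k) ((halfShift hR hS hSR x).1 k) = 1 ∧
      S ((halfShift hR hS hSR x).1 k) (x.1 (k + 1)) = 1 :=
  edgeMid_spec hR hS ⟨(x.1 k, x.1 (k + 1)), x.2 k⟩

theorem eq_halfShift {x : SubshiftSpace (R * S)} {y : SubshiftSpace (S * R)}
    (h : ∀ k, R (x.1 k) (y.1 k) = 1 ∧ S (y.1 k) (x.1 (k + 1)) = 1) :
    y = halfShift hR hS hSR x :=
  Subtype.ext <| funext fun k =>
    (existsUnique_of_mul_apply_eq_one hR hS (x.2 k)).unique (h k) (halfShift_spec hR hS hSR x k)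

theorem continuous_halfShift : Continuous (halfShift hR hS hSR) :=
  .subtype_mk (continuous_pi fun k => (continuous_of_discreteTopology (f := edgeMid hR hS)).comp'
    (.subtype_mk (((continuous_apply k).comp' continuous_subtype_val).prodMk
      ((continuous_apply (k + 1)).comp' continuous_subtype_val)) _)) _

theorem halfShift_semiconj :
    Function.Semiconj (halfShift hR hS hSR) (shiftMap (R * S)) (shiftMap (S * R)) :=
  fun _ => rfl

theorem halfShift_halfShift (hRS : ∀ i j, (R * S) i j = 0 ∨ (R * S) i j = 1)
    (x : SubshiftSpace (R * S)) :
    halfShift hS hR hRS (halfShift hR hS hSR x) = shiftMap (R * S) x :=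
  (eq_halfShift hS hR hRS fun k =>
    ⟨(halfShift_spec hR hS hSR x k).2, (halfShift_spec hR hS hSR x (k + 1)).1⟩).symm

theorem halfShift_bijective (hRS : ∀ i j, (R * S) i j = 0 ∨ (R * S) i j = 1) :
    Function.Bijective (halfShift hR hS hSR) :=
  ⟨.of_comp (f := halfShift hS hR hRS) <| by
      simpa only [Function.comp_def, halfShift_halfShift] using (shiftMap_bijective _).1,
    .of_comp (g := halfShift hS hR hRS) <| by
      simpa only [Function.comp_def, halfShift_halfShift] using (shiftMap_bijective _).2⟩

end HalfShift

def SqMat.Conjugate (P Q : SqMat) : Prop :=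
  ∃ h : SubshiftSpace P.M ≃ₜ SubshiftSpace Q.M,
    Function.Semiconj h (shiftMap P.M) (shiftMap Q.M)

theorem SqMat.Conjugate.trans {P Q T : SqMat} (hPQ : P.Conjugate Q) (hQT : Q.Conjugate T) :
    P.Conjugate T := by
  obtain ⟨e, he⟩ := hPQ
  obtain ⟨e', he'⟩ := hQT
  exact ⟨e.trans e', he.trans he'⟩

theorem ElemSSE01.conjugate {P Q : SqMat} (h : ElemSSE01 P Q) : P.Conjugate Q := by
  obtain ⟨hP, hQ, R, S, hR, hS, hRS, hSR⟩ := h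
  simp only [SqMat.ZeroOne, hRS, hSR] at hP hQ
  rw [SqMat.Conjugate, hRS, hSR]
  exact ⟨(continuous_halfShift hR hS hQ).homeoOfEquivCompactToT2
    (f := .ofBijective _ (halfShift_bijective hR hS hQ hP)), halfShift_semiconj hR hS hQ⟩

theorem StrongShiftEquiv01.conjugate {P Q : SqMat} (h : StrongShiftEquiv01 P Q) :
    P.Conjugate Q :=
  h.trans_induction_on ElemSSE01.conjugate fun _ _ => SqMat.Conjugate.trans

theorem sft_conjugate_of_strongShiftEquiv_general (n m : ℕ)
    (A : Matrix (Fin n) (Fin n) ℤ) (B : Matrix (Fin m) (Fin m) ℤ)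
    (h : StrongShiftEquiv01 ⟨n, A⟩ ⟨m, B⟩) :
    ∃ h : SubshiftSpace A ≃ₜ SubshiftSpace B,
      ∀ x : SubshiftSpace A, h (shiftMap A x) = shiftMap B (h x) :=
  h.conjugate

theorem sft_conjugate_of_strongShiftEquiv (n m : ℕ)
    (A : Matrix (Fin n) (Fin n) ℤ) (B : Matrix (Fin m) (Fin m) ℤ)
    (hA : ∀ i j, A i j = 0 ∨ A i j = 1) (hB : ∀ i j, B i j = 0 ∨ B i j = 1)
    (h : StrongShiftEquiv01 ⟨n, A⟩ ⟨m, B⟩) :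
    ∃ h : SubshiftSpace A ≃ₜ SubshiftSpace B,
      ∀ x : SubshiftSpace A, h (shiftMap A x) = shiftMap B (h x) :=
  sft_conjugate_of_strongShiftEquiv_general n m A B h
end

section
/- Let A₃ be the 2×2 integer matrix [[5, 1], [4, 1]]. Then the abelian group ℤ²/(I − A₃ᵗ)ℤ² is isomorphic to ℤ/4ℤ. In particular K₀(𝒪_{A₃}) ≅ ℤ/4ℤ. -/
/-- The matrix `A₃ = [[5, 1], [4, 1]]`. -/
def A3 : Matrix (Fin 2) (Fin 2) ℤ := !![5, 1; 4, 1]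

theorem K0_of_A3 :
    Nonempty (cokernel (1 - A3.transpose) ≃+ ZMod 4) := by
  have hM : (1 - A3.transpose) = !![-4, -4; -1, 0] := by
    ext i j
    fin_cases i <;> fin_cases j <;>
      norm_num [A3, Matrix.one_apply, Matrix.vecHead, Matrix.vecTail]
  let φ : (Fin 2 → ℤ) →ₗ[ℤ] ZMod 4 :=
    { toFun := fun x => (x 0 : ZMod 4)
      map_add' := by intro x y; simp only [Pi.add_apply]; push_cast; ring
      map_smul' := by intro c x; push_cast [zsmul_eq_mul]; simp }
  have hsub : LinearMap.range (1 - A3.transpose).mulVecLin ≤ LinearMap.ker φ := by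
    rintro x ⟨y, rfl⟩
    simp only [LinearMap.mem_ker, hM, φ, Matrix.mulVecLin_apply, LinearMap.coe_mk,
      AddHom.coe_mk]
    have : (!![(-4:ℤ), -4; -1, 0].mulVec y) 0 = -4 * y 0 + -4 * y 1 := by
      simp [Matrix.mulVec, dotProduct, Fin.sum_univ_two]
    rw [this]
    push_cast
    have h4 : ((-4:ℤ) : ZMod 4) = 0 := by decide
    push_cast at h4
    rw [h4]
    ring
  let f := Submodule.liftQ _ φ hsub
  have hinj : Function.Injective f := by
    rw [← LinearMap.ker_eq_bot, Submodule.ker_liftQ_eq_bot]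
    intro x hx
    simp only [LinearMap.mem_ker, φ, LinearMap.coe_mk, AddHom.coe_mk] at hx
    rw [ZMod.intCast_zmod_eq_zero_iff_dvd] at hx
    obtain ⟨k, hk⟩ := hx
    have hk' : x 0 = 4 * k := by exact_mod_cast hk
    refine ⟨![-x 1, x 1 - k], ?_⟩
    rw [hM]
    funext i
    fin_cases i <;>
      simp [Matrix.mulVecLin_apply, Matrix.mulVec, dotProduct,
        Fin.sum_univ_two] <;> linarith
  have hsurj : Function.Surjective f := by
    intro c
    refine ⟨Submodule.Quotient.mk ![c.val, 0], ?_⟩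
    simp only [f, Submodule.liftQ_apply, φ, LinearMap.coe_mk, AddHom.coe_mk]
    push_cast
    simp [ZMod.natCast_val, ZMod.cast_id]
  exact ⟨(LinearEquiv.ofBijective f ⟨hinj, hsurj⟩).toAddEquiv⟩
end
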